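/- arXiv:1004.0408 — 2 statements merged into one kernel-verified Lean document; each statement's English description precedes it below -/
import Mathlib

section
/- Let (m_n) be a sequence of positive integers and (μ_n) a sequence in (0,∞) such that m_n → ∞, μ_n → 0 and m_n^γ·μ_n → C as n → ∞ for some constant C ∈ (0, b/(1−γ)). Then the truncated partition function admits the first-order expansion z_{m_n}(e^{μ_n}) = z(1) + z'(1)·μ_n + o(μ_n), i.e. (z_{m_n}(e^{μ_n}) − z(1) − μ_n·Σ_{k=0}^∞ k·w(k))/μ_n → 0 as n → ∞. -/
open Filter Topology

/-- Zero-range jump rates: `g 0 = 0`, `g n = 1 + b / n ^ γ` for `n ≥ 1`. -/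
noncomputable def zrpG (b γ : ℝ) (n : ℕ) : ℝ := if n = 0 then 0 else 1 + b / (n : ℝ) ^ γ

/-- Stationary weights: `w 0 = 1`, `w n = ∏_{k=1}^n 1 / g k`. -/
noncomputable def zrpW (b γ : ℝ) (n : ℕ) : ℝ := ∏ k ∈ Finset.Icc 1 n, (zrpG b γ k)⁻¹

/-- Single-site partition function `z φ = Σ_{k≥0} w k · φ^k`. -/
noncomputable def zrpZfun (b γ φ : ℝ) : ℝ := ∑' k : ℕ, zrpW b γ k * φ ^ k

/-- Critical density `ρ_c = (Σ k·w k) / z 1`. -/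
noncomputable def zrpRhoC (b γ : ℝ) : ℝ :=
  (∑' k : ℕ, (k : ℝ) * zrpW b γ k) / (∑' k : ℕ, zrpW b γ k)

/-- Critical variance `σ_c² = (Σ k²·w k) / z 1 − ρ_c²`. -/
noncomputable def zrpSigmaSq (b γ : ℝ) : ℝ :=
  (∑' k : ℕ, (k : ℝ) ^ 2 * zrpW b γ k) / (∑' k : ℕ, zrpW b γ k) - (zrpRhoC b γ) ^ 2

/-- Truncated partition function `z_m(φ) = Σ_{k=0}^m w k · φ^k`. -/
noncomputable def zrpZtrunc (b γ : ℝ) (m : ℕ) (φ : ℝ) : ℝ :=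
  ∑ k ∈ Finset.range (m + 1), zrpW b γ k * φ ^ k

/-- Truncated density function `R_m(φ) = (Σ_{k=0}^m k·w k·φ^k) / z_m(φ)`. -/
noncomputable def zrpRtrunc (b γ : ℝ) (m : ℕ) (φ : ℝ) : ℝ :=
  (∑ k ∈ Finset.range (m + 1), (k : ℝ) * zrpW b γ k * φ ^ k) / zrpZtrunc b γ m φ

/-- Canonical partition function `Z(L,N) = Σ_{η : Fin L → ℕ, Σ η = N} ∏ w (η x)`. -/
noncomputable def zrpZc (b γ : ℝ) (L N : ℕ) : ℝ :=
  ∑ η ∈ (Fintype.piFinset fun _ : Fin L => Finset.range (N + 1)).filter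
      (fun η => ∑ x, η x = N),
    ∏ x, zrpW b γ (η x)

/-- Cut-off canonical partition function, restricting to `η x ≤ m` for all `x`. -/
noncomputable def zrpQc (b γ : ℝ) (L N m : ℕ) : ℝ :=
  ∑ η ∈ (Fintype.piFinset fun _ : Fin L => Finset.range (N + 1)).filter
      (fun η => ∑ x, η x = N ∧ ∀ x, η x ≤ m),
    ∏ x, zrpW b γ (η x)

/-- Finite-size rate function `I_{L,N}(m)`. -/
noncomputable def zrpI (b γ : ℝ) (L N m : ℕ) : ℝ :=
  -(1 / (L : ℝ)) * Real.log ((zrpQc b γ L N m - zrpQc b γ L N (m - 1)) / zrpZc b γ L N)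

/-!
For `c < b / (1 - γ)`, the bounds `log (1 + u) ≥ u / (1 + u)` and
`(n + 1) ^ (1 - γ) - n ^ (1 - γ) ≤ (1 - γ) n ^ (-γ)` make `w n · exp (c n ^ (1 - γ))` eventually
decreasing, so `w n ≤ D exp (-c n ^ (1 - γ))`. Then split
`z_m(e^μ) - z(1) - μ z'(1) = ∑_{k ≤ m} w k (e^{kμ} - 1 - kμ) - ∑_{k > m} w k - μ ∑_{k > m} k w k`.
For `k ≤ m` we have `kμ ≤ (m^γ μ) k^(1-γ)`, and `m^γ μ → C < c`, so `w k e^{kμ}` still decays like a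
stretched exponential and the first sum is `O(μ²)`. The second sum is at most
`m^(-γ) ∑_{k > m} k w k = μ (m^γ μ)⁻¹ o(1) = o(μ)`, and the last term is `μ` times a vanishing
tail.
-/

lemma Real.exp_sub_one_sub_le_sq_mul_exp {x : ℝ} (hx : 0 ≤ x) :
    Real.exp x - 1 - x ≤ x ^ 2 * Real.exp x := by
  have h : Real.exp x * (1 - x) ≤ 1 := by
    calc Real.exp x * (1 - x) ≤ Real.exp x * Real.exp (-x) := by
          gcongr; exact Real.one_sub_le_exp_neg x
      _ = 1 := by rw [← Real.exp_add, add_neg_cancel, Real.exp_zero]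
  nlinarith [Real.add_one_le_exp x, mul_le_mul_of_nonneg_left h hx]

lemma Real.add_one_rpow_sub_rpow_le {x p : ℝ} (hx : 0 < x) (hp0 : 0 ≤ p) (hp1 : p ≤ 1) :
    (x + 1) ^ p - x ^ p ≤ p * x ^ (p - 1) := by
  have hbern := rpow_one_add_le_one_add_mul_self (s := x⁻¹) (by linarith [inv_pos.2 hx]) hp0 hp1
  have hsplit : (x + 1) ^ p = x ^ p * (1 + x⁻¹) ^ p := by
    rw [← Real.mul_rpow hx.le (by positivity), mul_add, mul_inv_cancel₀ hx.ne', mul_one]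
  rw [hsplit, Real.rpow_sub_one hx.ne']
  calc x ^ p * (1 + x⁻¹) ^ p - x ^ p ≤ x ^ p * (1 + p * x⁻¹) - x ^ p := by gcongr
    _ = p * (x ^ p / x) := by ring

lemma mul_le_rpow_mul_mul_rpow_one_sub {x y μ γ : ℝ} (hx : 0 ≤ x) (hxy : x ≤ y) (hμ : 0 ≤ μ)
    (hγ : 0 ≤ γ) : x * μ ≤ y ^ γ * μ * x ^ (1 - γ) :=
  calc x * μ = x ^ γ * μ * x ^ (1 - γ) := by
        rw [mul_right_comm, ← Real.rpow_add' hx (by norm_num), add_sub_cancel, Real.rpow_one]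
    _ ≤ y ^ γ * μ * x ^ (1 - γ) := by gcongr

lemma mul_exp_sub_one_sub_le_of_le_mul_exp {a x s c c₁ D : ℝ} (ha : 0 ≤ a)
    (haD : a ≤ D * Real.exp (-c * s)) (hx : 0 ≤ x) (hxs : x ≤ c₁ * s) :
    a * (Real.exp x - 1 - x) ≤ x ^ 2 * (D * Real.exp (-(c - c₁) * s)) := by
  have hdecay : a * Real.exp x ≤ D * Real.exp (-(c - c₁) * s) :=
    calc a * Real.exp x ≤ D * Real.exp (-c * s) * Real.exp (c₁ * s) :=
          mul_le_mul haD (Real.exp_le_exp.2 hxs) (Real.exp_pos _).le (ha.trans haD)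
      _ = D * Real.exp (-(c - c₁) * s) := by rw [mul_assoc, ← Real.exp_add]; ring_nf
  calc a * (Real.exp x - 1 - x) ≤ a * (x ^ 2 * Real.exp x) :=
        mul_le_mul_of_nonneg_left (Real.exp_sub_one_sub_le_sq_mul_exp hx) ha
    _ = x ^ 2 * (a * Real.exp x) := by ring
    _ ≤ x ^ 2 * (D * Real.exp (-(c - c₁) * s)) := by gcongr

lemma summable_pow_mul_exp_neg_mul_rpow {p c : ℝ} (hp : 0 < p) (hc : 0 < c) (j : ℕ) :
    Summable fun n : ℕ => (n : ℝ) ^ j * Real.exp (-c * (n : ℝ) ^ p) := by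
  have hlim : Tendsto (fun n : ℕ => (n : ℝ) ^ ((j : ℝ) + 2) * Real.exp (-c * (n : ℝ) ^ p))
      atTop (𝓝 0) := by
    refine ((tendsto_rpow_mul_exp_neg_mul_atTop_nhds_zero (((j : ℝ) + 2) / p) c hc).comp
      ((tendsto_rpow_atTop hp).comp tendsto_natCast_atTop_atTop)).congr fun n => ?_
    simp only [Function.comp_apply, ← Real.rpow_mul (Nat.cast_nonneg n),
      mul_div_cancel₀ _ hp.ne']
  refine summable_of_isBigO_nat (Real.summable_nat_rpow.2 (by norm_num : (-2 : ℝ) < -1)) ?_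
  refine ((hlim.isBigO_one ℝ).mul (Asymptotics.isBigO_refl (fun n : ℕ => (n : ℝ) ^ (-2 : ℝ))
    atTop)).congr' ?_ (by simp)
  filter_upwards [eventually_gt_atTop 0] with n hn
  have hn' : (0 : ℝ) < n := Nat.cast_pos.2 hn
  rw [mul_right_comm, ← Real.rpow_add hn', ← Real.rpow_natCast]
  ring_nf

lemma summable_pow_mul_of_le_mul_exp {f : ℕ → ℝ} {p c D : ℝ} (hp : 0 < p) (hc : 0 < c)
    (hf0 : ∀ k, 0 ≤ f k) (hf : ∀ k, f k ≤ D * Real.exp (-c * (k : ℝ) ^ p)) (j : ℕ) :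
    Summable fun k : ℕ => (k : ℝ) ^ j * f k :=
  ((summable_pow_mul_exp_neg_mul_rpow hp hc j).mul_left D).of_nonneg_of_le
    (fun k => mul_nonneg (by positivity) (hf0 k))
    (fun k => by rw [mul_left_comm]; exact mul_le_mul_of_nonneg_left (hf k) (by positivity))

lemma bddAbove_range_of_eventually_succ_le {α : Type*} [Preorder α] [IsDirectedOrder α]
    {f : ℕ → α} (h : ∀ᶠ n in atTop, f (n + 1) ≤ f n) : BddAbove (Set.range f) := by
  obtain ⟨N, hN⟩ := eventually_atTop.1 h
  refine (isBoundedUnder_of_eventually_le (a := f N) (eventually_atTop.2 ⟨N, fun n hn => ?_⟩))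
    |>.bddAbove_range
  exact antitoneOn_nat_Ici_of_succ_le hN (le_refl N) hn hn

section Weights

variable {b γ : ℝ}

lemma zrpG_of_ne_zero {k : ℕ} (hk : k ≠ 0) : zrpG b γ k = 1 + b / (k : ℝ) ^ γ :=
  if_neg hk

lemma zrpG_pos (hb : 0 ≤ b) {k : ℕ} (hk : k ≠ 0) : 0 < zrpG b γ k := by
  rw [zrpG_of_ne_zero hk]
  positivity

lemma zrpW_pos (hb : 0 ≤ b) (n : ℕ) : 0 < zrpW b γ n :=
  Finset.prod_pos fun k hk => inv_pos.2 (zrpG_pos hb (by linarith [(Finset.mem_Icc.1 hk).1]))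

lemma zrpW_succ (n : ℕ) : zrpW b γ (n + 1) = zrpW b γ n / zrpG b γ (n + 1) := by
  rw [zrpW, Finset.prod_Icc_succ_top (by omega), ← div_eq_mul_inv, zrpW]

lemma eventually_mul_rpow_succ_sub_le_log_zrpG {c : ℝ} (hγ0 : 0 < γ) (hγ1 : γ < 1) (hc : 0 ≤ c)
    (hcb : c * (1 - γ) < b) :
    ∀ᶠ n : ℕ in atTop,
      c * (((n + 1 : ℕ) : ℝ) ^ (1 - γ) - (n : ℝ) ^ (1 - γ)) ≤ Real.log (zrpG b γ (n + 1)) := by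
  have hp : 0 < 1 - γ := sub_pos.2 hγ1
  have hb : 0 < b := lt_of_le_of_lt (by positivity) hcb
  filter_upwards [eventually_gt_atTop 0, ((tendsto_rpow_atTop hγ0).comp
    tendsto_natCast_atTop_atTop).eventually_ge_atTop (c * (1 - γ) * (1 + b) / (b - c * (1 - γ)))]
    with n hn hnγ
  have hn' : (0 : ℝ) < n := Nat.cast_pos.2 hn
  have hnγ' : c * (1 - γ) * (1 + b) ≤ (b - c * (1 - γ)) * (n : ℝ) ^ γ := by
    rwa [Function.comp_apply, div_le_iff₀' (sub_pos.2 hcb)] at hnγ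
  have hsucc : ((n : ℝ) + 1) ^ γ ≤ (n : ℝ) ^ γ + 1 := by
    simpa using Real.rpow_add_le_add_rpow hn'.le zero_le_one hγ0.le hγ1.le
  have hlog : b / (((n : ℝ) + 1) ^ γ + b) ≤ Real.log (zrpG b γ (n + 1)) := by
    have := Real.one_sub_inv_le_log_of_pos (zrpG_pos (γ := γ) hb.le n.succ_ne_zero)
    rw [zrpG_of_ne_zero n.succ_ne_zero] at this ⊢
    convert this using 1
    push_cast
    have : (0 : ℝ) < ((n : ℝ) + 1) ^ γ := by positivity
    field_simp
    ring
  have hnγpos : (0 : ℝ) < (n : ℝ) ^ γ := by positivity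
  push_cast
  calc c * (((n : ℝ) + 1) ^ (1 - γ) - (n : ℝ) ^ (1 - γ))
      ≤ c * ((1 - γ) * (n : ℝ) ^ (1 - γ - 1)) := by
        gcongr; exact Real.add_one_rpow_sub_rpow_le hn' hp.le (by linarith)
    _ = c * (1 - γ) / (n : ℝ) ^ γ := by
        rw [sub_sub_cancel_left, Real.rpow_neg hn'.le]; ring
    _ ≤ b / (((n : ℝ) + 1) ^ γ + b) := by
        rw [div_le_div_iff₀ hnγpos (by positivity)]
        nlinarith [mul_le_mul_of_nonneg_left hsucc (mul_nonneg hc hp.le)]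
    _ ≤ Real.log (zrpG b γ (n + 1)) := hlog

lemma exists_zrpW_le_mul_exp {c : ℝ} (hγ0 : 0 < γ) (hγ1 : γ < 1) (hc : 0 ≤ c)
    (hcb : c * (1 - γ) < b) :
    ∃ D, ∀ n : ℕ, zrpW b γ n ≤ D * Real.exp (-c * (n : ℝ) ^ (1 - γ)) := by
  have hb : 0 ≤ b := by nlinarith
  obtain ⟨D, hD⟩ := bddAbove_range_of_eventually_succ_le
    (f := fun n : ℕ => zrpW b γ n * Real.exp (c * (n : ℝ) ^ (1 - γ))) <| by
    filter_upwards [eventually_mul_rpow_succ_sub_le_log_zrpG hγ0 hγ1 hc hcb] with n hn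
    have hg := zrpG_pos (γ := γ) hb n.succ_ne_zero
    rw [Real.le_log_iff_exp_le hg] at hn
    rw [zrpW_succ, div_mul_eq_mul_div, div_le_iff₀ hg]
    calc zrpW b γ n * Real.exp (c * ((n + 1 : ℕ) : ℝ) ^ (1 - γ))
        = zrpW b γ n * Real.exp (c * (n : ℝ) ^ (1 - γ)) *
            Real.exp (c * (((n + 1 : ℕ) : ℝ) ^ (1 - γ) - (n : ℝ) ^ (1 - γ))) := by
          rw [mul_assoc, ← Real.exp_add]; ring_nf
      _ ≤ zrpW b γ n * Real.exp (c * (n : ℝ) ^ (1 - γ)) * zrpG b γ (n + 1) :=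
          mul_le_mul_of_nonneg_left hn (mul_nonneg (zrpW_pos hb n).le (Real.exp_pos _).le)
  refine ⟨D, fun n => ?_⟩
  rw [neg_mul, Real.exp_neg, ← div_eq_mul_inv, le_div_iff₀ (Real.exp_pos _)]
  exact hD ⟨n, rfl⟩

end Weights

section Expansion

variable {f : ℕ → ℝ} {m : ℕ → ℕ} {μ : ℕ → ℝ} {γ C : ℝ}

lemma sum_range_mul_exp_pow_sub_tsum_sub_mul_tsum (hf : Summable f)
    (hf₁ : Summable fun k : ℕ => (k : ℝ) * f k) (N : ℕ) (x : ℝ) :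
    ∑ k ∈ Finset.range N, f k * Real.exp x ^ k - ∑' k, f k - x * ∑' k : ℕ, (k : ℝ) * f k =
      ∑ k ∈ Finset.range N, f k * (Real.exp (k * x) - 1 - k * x) - ∑' k, f (k + N)
        - x * ∑' k : ℕ, ((k + N : ℕ) : ℝ) * f (k + N) := by
  have hhead : ∑ k ∈ Finset.range N, f k * (Real.exp (k * x) - 1 - k * x) =
      ∑ k ∈ Finset.range N, f k * Real.exp x ^ k - ∑ k ∈ Finset.range N, f k
        - x * ∑ k ∈ Finset.range N, (k : ℝ) * f k := by
    rw [Finset.mul_sum, ← Finset.sum_sub_distrib, ← Finset.sum_sub_distrib]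
    refine Finset.sum_congr rfl fun k _ => ?_
    rw [← Real.exp_nat_mul]
    ring
  rw [hhead, ← hf.sum_add_tsum_nat_add N, ← hf₁.sum_add_tsum_nat_add N]
  ring

lemma tendsto_sum_range_mul_exp_sub_one_sub_div {c D : ℝ} (hγ0 : 0 ≤ γ) (hγ1 : γ < 1)
    (hf0 : ∀ k, 0 ≤ f k) (hf : ∀ k, f k ≤ D * Real.exp (-c * (k : ℝ) ^ (1 - γ)))
    (hμpos : ∀ n, 0 < μ n) (hμ : Tendsto μ atTop (𝓝 0))
    (hC : Tendsto (fun n => (m n : ℝ) ^ γ * μ n) atTop (𝓝 C)) (hCc : C < c) :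
    Tendsto (fun n => (∑ k ∈ Finset.range (m n + 1),
      f k * (Real.exp (k * μ n) - 1 - k * μ n)) / μ n) atTop (𝓝 0) := by
  obtain ⟨c₁, hCc₁, hc₁c⟩ := exists_between hCc
  have hD : 0 ≤ D := by
    have := (hf0 0).trans (hf 0)
    rwa [Nat.cast_zero, Real.zero_rpow (by linarith), mul_zero, Real.exp_zero, mul_one] at this
  set F := ∑' k : ℕ, (k : ℝ) ^ 2 * Real.exp (-(c - c₁) * (k : ℝ) ^ (1 - γ))
  have hF := summable_pow_mul_exp_neg_mul_rpow (sub_pos.2 hγ1) (sub_pos.2 hc₁c) 2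
  refine squeeze_zero' (Eventually.of_forall fun n => div_nonneg (Finset.sum_nonneg fun k _ =>
    mul_nonneg (hf0 k) (by linarith [Real.add_one_le_exp (k * μ n)])) (hμpos n).le) ?_
    (by simpa using hμ.mul_const (D * F))
  filter_upwards [hC.eventually (eventually_le_nhds hCc₁)] with n hn
  rw [div_le_iff₀ (hμpos n)]
  have hterm : ∀ k ∈ Finset.range (m n + 1), f k * (Real.exp (k * μ n) - 1 - k * μ n) ≤
      μ n ^ 2 * D * ((k : ℝ) ^ 2 * Real.exp (-(c - c₁) * (k : ℝ) ^ (1 - γ))) := by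
    intro k hk
    have hkμ : 0 ≤ (k : ℝ) * μ n := mul_nonneg k.cast_nonneg (hμpos n).le
    have hk : (k : ℝ) * μ n ≤ c₁ * (k : ℝ) ^ (1 - γ) :=
      (mul_le_rpow_mul_mul_rpow_one_sub k.cast_nonneg
        (Nat.cast_le.2 (Nat.lt_succ_iff.1 (Finset.mem_range.1 hk))) (hμpos n).le hγ0).trans
        (mul_le_mul_of_nonneg_right hn (by positivity))
    calc f k * (Real.exp (k * μ n) - 1 - k * μ n)
        ≤ ((k : ℝ) * μ n) ^ 2 * (D * Real.exp (-(c - c₁) * (k : ℝ) ^ (1 - γ))) :=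
          mul_exp_sub_one_sub_le_of_le_mul_exp (hf0 k) (hf k) hkμ hk
      _ = _ := by ring
  calc ∑ k ∈ Finset.range (m n + 1), f k * (Real.exp (k * μ n) - 1 - k * μ n)
      ≤ μ n ^ 2 * D * ∑ k ∈ Finset.range (m n + 1),
          (k : ℝ) ^ 2 * Real.exp (-(c - c₁) * (k : ℝ) ^ (1 - γ)) := by
        rw [Finset.mul_sum]; exact Finset.sum_le_sum hterm
    _ ≤ μ n ^ 2 * D * F := by
        gcongr; exact hF.sum_le_tsum _ fun k _ => by positivity
    _ = μ n * (D * F) * μ n := by ring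

lemma tendsto_tsum_nat_add_div (hγ0 : 0 ≤ γ) (hγ1 : γ ≤ 1) (hf0 : ∀ k, 0 ≤ f k)
    (hf₁ : Summable fun k : ℕ => (k : ℝ) * f k) (hmpos : ∀ n, 0 < m n)
    (hm : Tendsto m atTop atTop) (hμpos : ∀ n, 0 < μ n)
    (hC : Tendsto (fun n => (m n : ℝ) ^ γ * μ n) atTop (𝓝 C)) (hC0 : 0 < C) :
    Tendsto (fun n => (∑' k, f (k + (m n + 1))) / μ n) atTop (𝓝 0) := by
  have htail : Tendsto (fun n => ∑' k : ℕ, ((k + (m n + 1) : ℕ) : ℝ) * f (k + (m n + 1)))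
      atTop (𝓝 0) := (tendsto_sum_nat_add fun k : ℕ => (k : ℝ) * f k).comp
    (tendsto_atTop_mono (fun n => Nat.le_succ (m n)) hm)
  refine squeeze_zero (g := fun n => (∑' k : ℕ, ((k + (m n + 1) : ℕ) : ℝ) * f (k + (m n + 1))) *
      ((m n : ℝ) ^ γ * μ n)⁻¹) (fun n => div_nonneg (tsum_nonneg fun k => hf0 _) (hμpos n).le)
    (fun n => ?_) (by simpa only [zero_mul] using htail.mul (hC.inv₀ hC0.ne'))
  have hmγ : 0 < (m n : ℝ) ^ γ := by have := hmpos n; positivity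
  have hdom : (m n : ℝ) ^ γ * ∑' k, f (k + (m n + 1)) ≤
      ∑' k : ℕ, ((k + (m n + 1) : ℕ) : ℝ) * f (k + (m n + 1)) := by
    have hle (k : ℕ) : (m n : ℝ) ^ γ * f (k + (m n + 1)) ≤
        ((k + (m n + 1) : ℕ) : ℝ) * f (k + (m n + 1)) := by
      refine mul_le_mul_of_nonneg_right ?_ (hf0 _)
      calc (m n : ℝ) ^ γ ≤ ((m n : ℝ) + 1) ^ γ := by gcongr; linarith
        _ ≤ ((m n : ℝ) + 1) ^ (1 : ℝ) := by gcongr; linarith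
        _ ≤ ((k + (m n + 1) : ℕ) : ℝ) := by rw [Real.rpow_one]; push_cast; linarith
    have hsum := (summable_nat_add_iff (m n + 1)).2 hf₁
    rw [← tsum_mul_left]
    exact (hsum.of_nonneg_of_le (fun k => mul_nonneg hmγ.le (hf0 _)) hle).tsum_le_tsum hle hsum
  calc (∑' k, f (k + (m n + 1))) / μ n
      = ((m n : ℝ) ^ γ * ∑' k, f (k + (m n + 1))) * ((m n : ℝ) ^ γ * μ n)⁻¹ := by
        field_simp [(hμpos n).ne']
    _ ≤ _ := mul_le_mul_of_nonneg_right hdom (by have := hμpos n; positivity)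

end Expansion

/-- Under the cut-off scaling `m_n → ∞`, `μ_n → 0⁺`, `m_n^γ·μ_n → C`
with `0 < C < b/(1−γ)`, the truncated partition function expands as
`z_{m_n}(e^{μ_n}) = z(1) + z'(1)·μ_n + o(μ_n)`. -/
theorem truncated_partition_expansion (b γ : ℝ) (hγ0 : 0 < γ) (hγ1 : γ < 1) (hb : 0 < b)
    (m : ℕ → ℕ) (μ : ℕ → ℝ) (C : ℝ)
    (hmpos : ∀ n, 0 < m n) (hμpos : ∀ n, 0 < μ n)
    (hm : Tendsto m atTop atTop) (hμ : Tendsto μ atTop (nhds 0))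
    (hC : Tendsto (fun n => (m n : ℝ) ^ γ * μ n) atTop (nhds C))
    (hC0 : 0 < C) (hCb : C < b / (1 - γ)) :
    Tendsto
      (fun n => (zrpZtrunc b γ (m n) (Real.exp (μ n)) - zrpZfun b γ 1
        - μ n * (∑' k : ℕ, (k : ℝ) * zrpW b γ k)) / μ n) atTop (nhds 0) := by
  obtain ⟨c, hCc, hcb⟩ := exists_between hCb
  have hc : 0 < c := hC0.trans hCc
  have hp : 0 < 1 - γ := sub_pos.2 hγ1
  obtain ⟨D, hD⟩ := exists_zrpW_le_mul_exp hγ0 hγ1 hc.le ((lt_div_iff₀ hp).1 hcb)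
  have hw0 : ∀ k, 0 ≤ zrpW b γ k := fun k => (zrpW_pos hb.le k).le
  have hw : Summable (zrpW b γ) := by
    simpa using summable_pow_mul_of_le_mul_exp hp hc hw0 hD 0
  have hw₁ : Summable fun k : ℕ => (k : ℝ) * zrpW b γ k := by
    simpa using summable_pow_mul_of_le_mul_exp hp hc hw0 hD 1
  have htail := (tendsto_sum_nat_add fun k : ℕ => (k : ℝ) * zrpW b γ k).comp
    (tendsto_atTop_mono (fun n => Nat.le_succ (m n)) hm)
  have hlim := ((tendsto_sum_range_mul_exp_sub_one_sub_div hγ0.le hγ1 hw0 hD hμpos hμ hC hCc).sub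
    (tendsto_tsum_nat_add_div hγ0.le hγ1.le hw0 hw₁ hmpos hm hμpos hC hC0)).sub htail
  rw [sub_zero, sub_zero] at hlim
  refine hlim.congr fun n => ?_
  simp only [zrpZtrunc, zrpZfun, one_pow, mul_one]
  rw [sum_range_mul_exp_pow_sub_tsum_sub_mul_tsum hw hw₁, sub_div, sub_div,
    mul_div_cancel_left₀ _ (hμpos n).ne']
  rfl
end

section
/- For all integers L ≥ 2 and N ≥ m ≥ 1, the total canonical weight of configurations whose maximal occupation equals exactly m is sandwiched as follows: L·w(m)·Q(L−1, N−m, m−1) ≤ Q(L,N,m) − Q(L,N,m−1) ≤ L·w(m)·Q(L−1, N−m, m). -/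
open Filter Topology

/-! A configuration whose maximum is exactly `m` has a site `i` with `η i = m`; deleting that site
leaves a configuration of `L - 1` sites with sum `N - m` and maximum at most `m`, so a union bound
over `i` gives the upper estimate. Conversely, inserting `m` at site `i` into a configuration with
maximum at most `m - 1` produces a configuration whose maximum `m` is attained only at `i`; these
insertions are disjoint for distinct `i`, which gives the lower estimate. -/

open Finset Finset.Nat

lemma Finset.sum_biUnion_le_sum_sum {ι α M : Type*} [DecidableEq α] [AddCommMonoid M]
    [PartialOrder M] [IsOrderedAddMonoid M] {f : α → M} (hf : ∀ x, 0 ≤ f x)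
    (u : Finset ι) (t : ι → Finset α) :
    ∑ x ∈ u.biUnion t, f x ≤ ∑ i ∈ u, ∑ x ∈ t i, f x := by
  classical
  induction u using Finset.induction_on with
  | empty => simp
  | insert i u hi ih =>
    rw [biUnion_insert, sum_insert hi]
    calc ∑ x ∈ t i ∪ u.biUnion t, f x
        ≤ ∑ x ∈ t i ∪ u.biUnion t, f x + ∑ x ∈ t i ∩ u.biUnion t, f x :=
          le_add_of_nonneg_right (sum_nonneg fun x _ => hf x)
      _ = ∑ x ∈ t i, f x + ∑ x ∈ u.biUnion t, f x := sum_union_inter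
      _ ≤ _ := by gcongr

lemma zrpW_nonneg {b : ℝ} (hb : 0 ≤ b) (γ : ℝ) (n : ℕ) : 0 ≤ zrpW b γ n := by
  refine prod_nonneg fun k hk => inv_nonneg.2 ?_
  have hk0 : k ≠ 0 := by rw [mem_Icc] at hk; omega
  rw [zrpG, if_neg hk0]
  positivity

section Configurations

variable (L N m c : ℕ)

def cutoffConfigs : Finset (Fin L → ℕ) :=
  (antidiagonalTuple L N).filter fun η => ∀ x, η x ≤ m

def pinnedConfigs (i : Fin (L + 1)) : Finset (Fin (L + 1) → ℕ) :=
  (antidiagonalTuple (L + 1) N).filter fun η => η i = m ∧ ∀ j, η (i.succAbove j) ≤ c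

def cutoffPartition (w : ℕ → ℝ) : ℝ :=
  ∑ η ∈ cutoffConfigs L N m, ∏ x, w (η x)

variable {L N m c}

lemma mem_cutoffConfigs {η : Fin L → ℕ} :
    η ∈ cutoffConfigs L N m ↔ ∑ x, η x = N ∧ ∀ x, η x ≤ m := by
  rw [cutoffConfigs, mem_filter, mem_antidiagonalTuple]

lemma mem_pinnedConfigs {i : Fin (L + 1)} {η : Fin (L + 1) → ℕ} :
    η ∈ pinnedConfigs L N m c i ↔
      ∑ x, η x = N ∧ η i = m ∧ ∀ j, η (i.succAbove j) ≤ c := by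
  rw [pinnedConfigs, mem_filter, mem_antidiagonalTuple]

lemma zrpQc_eq_cutoffPartition (b γ : ℝ) :
    zrpQc b γ L N m = cutoffPartition L N m (zrpW b γ) := by
  refine sum_congr (ext fun η => ?_) fun _ _ => rfl
  simp only [mem_filter, Fintype.mem_piFinset, mem_range, Nat.lt_succ_iff, mem_cutoffConfigs,
    and_iff_right_iff_imp, and_imp]
  exact fun hsum _ x => hsum ▸ single_le_sum (fun _ _ => Nat.zero_le _) (mem_univ x)

lemma sum_pinnedConfigs (w : ℕ → ℝ) (hmN : m ≤ N) (i : Fin (L + 1)) :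
    ∑ η ∈ pinnedConfigs L N m c i, ∏ x, w (η x) = w m * cutoffPartition L (N - m) c w := by
  rw [cutoffPartition, mul_sum]
  refine sum_nbij' i.removeNth (fun ζ => i.insertNth m ζ) (fun η hη => ?_) (fun ζ hζ => ?_)
    (fun η hη => ?_) (fun ζ _ => Fin.removeNth_insertNth ..) (fun η hη => ?_)
  · obtain ⟨hsum, hi, hle⟩ := mem_pinnedConfigs.1 hη
    rw [Fin.sum_univ_succAbove _ i, hi] at hsum
    exact mem_cutoffConfigs.2 ⟨by simp only [Fin.removeNth_apply]; omega, hle⟩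
  · obtain ⟨hsum, hle⟩ := mem_cutoffConfigs.1 hζ
    refine mem_pinnedConfigs.2 ⟨?_, by simp, by simpa using hle⟩
    rw [Fin.sum_univ_succAbove _ i]
    simp only [Fin.insertNth_apply_same, Fin.insertNth_apply_succAbove, hsum]
    omega
  · rw [← (mem_pinnedConfigs.1 hη).2.1, Fin.insertNth_self_removeNth]
  · rw [Fin.prod_univ_succAbove _ i, (mem_pinnedConfigs.1 hη).2.1]
    rfl

end Configurations

section Sandwich

variable {L N m : ℕ} {w : ℕ → ℝ}

lemma cutoffPartition_sub_cutoffPartition_pred :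
    cutoffPartition L N m w - cutoffPartition L N (m - 1) w =
      ∑ η ∈ cutoffConfigs L N m \ cutoffConfigs L N (m - 1), ∏ x, w (η x) := by
  refine (sum_sdiff_eq_sub fun η hη => ?_).symm
  obtain ⟨hsum, hle⟩ := mem_cutoffConfigs.1 hη
  exact mem_cutoffConfigs.2 ⟨hsum, fun x => (hle x).trans (Nat.sub_le m 1)⟩

lemma pairwiseDisjoint_pinnedConfigs (hm : 1 ≤ m) :
    ((univ : Finset (Fin (L + 1))) : Set (Fin (L + 1))).PairwiseDisjoint
      (pinnedConfigs L N m (m - 1)) := by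
  intro i _ i' _ hne
  refine disjoint_left.2 fun η hη hη' => ?_
  obtain ⟨j, rfl⟩ := Fin.exists_succAbove_eq hne.symm
  have := (mem_pinnedConfigs.1 hη).2.2 j
  rw [(mem_pinnedConfigs.1 hη').2.1] at this
  omega

lemma biUnion_pinnedConfigs_subset (hm : 1 ≤ m) :
    univ.biUnion (pinnedConfigs L N m (m - 1)) ⊆
      cutoffConfigs (L + 1) N m \ cutoffConfigs (L + 1) N (m - 1) := by
  intro η hη
  obtain ⟨i, -, hη⟩ := mem_biUnion.1 hη
  obtain ⟨hsum, hi, hle⟩ := mem_pinnedConfigs.1 hη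
  have hle' : ∀ x, η x ≤ m := i.forall_iff_succAbove.2 ⟨hi.le, fun j => (hle j).trans (by omega)⟩
  refine mem_sdiff.2 ⟨mem_cutoffConfigs.2 ⟨hsum, hle'⟩, fun h => ?_⟩
  have := (mem_cutoffConfigs.1 h).2 i
  omega

lemma subset_biUnion_pinnedConfigs :
    cutoffConfigs (L + 1) N m \ cutoffConfigs (L + 1) N (m - 1) ⊆
      univ.biUnion (pinnedConfigs L N m m) := by
  intro η hη
  obtain ⟨hη, hη'⟩ := mem_sdiff.1 hη
  obtain ⟨hsum, hle⟩ := mem_cutoffConfigs.1 hη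
  obtain ⟨i, hi⟩ : ∃ i, η i = m := by
    by_contra! hne
    exact hη' (mem_cutoffConfigs.2 ⟨hsum, fun x => by have := hle x; have := hne x; omega⟩)
  exact mem_biUnion.2 ⟨i, mem_univ i, mem_pinnedConfigs.2 ⟨hsum, hi, fun j => hle _⟩⟩

lemma sum_sum_pinnedConfigs (hmN : m ≤ N) (c : ℕ) :
    ∑ i, ∑ η ∈ pinnedConfigs L N m c i, ∏ x, w (η x) =
      (L + 1 : ℕ) * w m * cutoffPartition L (N - m) c w := by
  simp only [sum_pinnedConfigs w hmN, sum_const, card_univ, Fintype.card_fin, nsmul_eq_mul,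
    mul_assoc]

theorem mul_cutoffPartition_pred_le (hw : ∀ n, 0 ≤ w n) (hm : 1 ≤ m) (hmN : m ≤ N) :
    (L + 1 : ℕ) * w m * cutoffPartition L (N - m) (m - 1) w ≤
      cutoffPartition (L + 1) N m w - cutoffPartition (L + 1) N (m - 1) w := by
  rw [← sum_sum_pinnedConfigs hmN, ← sum_biUnion (pairwiseDisjoint_pinnedConfigs hm),
    cutoffPartition_sub_cutoffPartition_pred]
  exact sum_le_sum_of_subset_of_nonneg (biUnion_pinnedConfigs_subset hm)
    fun η _ _ => prod_nonneg fun x _ => hw (η x)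

theorem le_mul_cutoffPartition (hw : ∀ n, 0 ≤ w n) (hmN : m ≤ N) :
    cutoffPartition (L + 1) N m w - cutoffPartition (L + 1) N (m - 1) w ≤
      (L + 1 : ℕ) * w m * cutoffPartition L (N - m) m w := by
  have hf : ∀ η : Fin (L + 1) → ℕ, 0 ≤ ∏ x, w (η x) := fun η => prod_nonneg fun x _ => hw (η x)
  rw [← sum_sum_pinnedConfigs hmN, cutoffPartition_sub_cutoffPartition_pred]
  exact (sum_le_sum_of_subset_of_nonneg subset_biUnion_pinnedConfigs fun η _ _ => hf η).trans
    (sum_biUnion_le_sum_sum hf _ _)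

end Sandwich

theorem max_occupation_sandwich_general (b γ : ℝ) (hb : 0 < b)
    (L N m : ℕ) (hL : 2 ≤ L) (hm : 1 ≤ m) (hmN : m ≤ N) :
    (L : ℝ) * zrpW b γ m * zrpQc b γ (L - 1) (N - m) (m - 1) ≤
      zrpQc b γ L N m - zrpQc b γ L N (m - 1) ∧
    zrpQc b γ L N m - zrpQc b γ L N (m - 1) ≤
      (L : ℝ) * zrpW b γ m * zrpQc b γ (L - 1) (N - m) m := by
  obtain ⟨L, rfl⟩ : ∃ L', L = L' + 1 := ⟨L - 1, by omega⟩
  have hw := zrpW_nonneg hb.le γ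
  simp only [zrpQc_eq_cutoffPartition, Nat.add_sub_cancel]
  exact ⟨mul_cutoffPartition_pred_le hw hm hmN, le_mul_cutoffPartition hw hmN⟩

/-- For `L ≥ 2` and `N ≥ m ≥ 1`, the total canonical weight of configurations
whose maximal occupation equals exactly `m` is sandwiched:
`L·w(m)·Q(L−1, N−m, m−1) ≤ Q(L,N,m) − Q(L,N,m−1) ≤ L·w(m)·Q(L−1, N−m, m)`. -/
theorem max_occupation_sandwich (b γ : ℝ) (hγ0 : 0 < γ) (hγ1 : γ < 1) (hb : 0 < b)
    (L N m : ℕ) (hL : 2 ≤ L) (hm : 1 ≤ m) (hmN : m ≤ N) :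
    (L : ℝ) * zrpW b γ m * zrpQc b γ (L - 1) (N - m) (m - 1) ≤
      zrpQc b γ L N m - zrpQc b γ L N (m - 1) ∧
    zrpQc b γ L N m - zrpQc b γ L N (m - 1) ≤
      (L : ℝ) * zrpW b γ m * zrpQc b γ (L - 1) (N - m) m :=
  max_occupation_sandwich_general b γ hb L N m hL hm hmN
end
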